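/- Let A be a join-semilattice, c ∈ A, and I₁, I₂ subsemilattices with A = I₁ ⊕_c I₂. Then φ_c defines an isomorphism of semilattices between I₁ × I₂ (with componentwise join) and A. -/

import Mathlib

variable {α : Type*}

/-- `PMeet a b m`: the infimum of `{a, b}` exists and equals `m`. -/
def PMeet [SemilatticeSup α] (a b m : α) : Prop :=
  m ≤ a ∧ m ≤ b ∧ ∀ u, u ≤ a → u ≤ b → u ≤ m

/-- Partial equation `a ∧ b = a' ∧ b'`: if either infimum exists, so does the
other and they are equal. -/
def MeetEq [SemilatticeSup α] (a b a' b' : α) : Prop :=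
  (∀ m, PMeet a b m → PMeet a' b' m) ∧ (∀ m, PMeet a' b' m → PMeet a b m)

/-- Partial equation `(a ∧ b) ∨ y = a' ∧ b'`: if either side exists, so does
the other and they are equal. -/
def MeetJoinEq [SemilatticeSup α] (a b y a' b' : α) : Prop :=
  (∀ m, PMeet a b m → PMeet a' b' (m ⊔ y)) ∧
  (∀ m', PMeet a' b' m' → ∃ m, PMeet a b m ∧ m ⊔ y = m')

/-- `φ_c(x₁, x₂, x)`: the conjunction of dist, p1, p2 and join. -/
def Phi [SemilatticeSup α] (c x₁ x₂ x : α) : Prop :=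
  PMeet (x ⊔ x₁) (x ⊔ x₂) x ∧
  PMeet (x ⊔ x₁) (c ⊔ x₁) x₁ ∧
  PMeet (x ⊔ x₂) (c ⊔ x₂) x₂ ∧
  x₁ ⊔ x₂ = x ⊔ c

/-- A subsemilattice: a subset closed under join. -/
def SubSemilattice [SemilatticeSup α] (I : Set α) : Prop :=
  ∀ a ∈ I, ∀ b ∈ I, a ⊔ b ∈ I

/-- `A = I₁ ⊕_c I₂`: the generalized (c-)direct sum of two subsemilattices. -/
structure CDirectSum [SemilatticeSup α] (c : α) (I₁ I₂ : Set α) : Prop where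
  sub1 : SubSemilattice I₁
  sub2 : SubSemilattice I₂
  mod1 : ∀ x y : α, ∀ x₁ ∈ I₁, ∀ x₂ ∈ I₂, x₁ ⊔ x₂ ≤ x ⊔ c →
    MeetJoinEq (x ⊔ x₁) (x ⊔ x₂) y (x ⊔ y ⊔ x₁) (x ⊔ y ⊔ x₂)
  mod2 : ∀ x y : α, ∀ x₁ ∈ I₁, ∀ x₂ ∈ I₂, x ≤ x₁ ⊔ x₂ →
    MeetJoinEq (x ⊔ x₁) (c ⊔ x₁) y (x ⊔ y ⊔ x₁) (c ⊔ y ⊔ x₁) ∧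
    MeetJoinEq (x ⊔ x₂) (c ⊔ x₂) y (x ⊔ y ⊔ x₂) (c ⊔ y ⊔ x₂)
  abs1 : ∀ x₁ ∈ I₁, ∀ y₁ ∈ I₁, ∀ z₂ ∈ I₂, MeetEq x₁ (y₁ ⊔ z₂) x₁ (y₁ ⊔ c)
  abs2 : ∀ x₂ ∈ I₂, ∀ y₂ ∈ I₂, ∀ z₁ ∈ I₁, MeetEq x₂ (y₂ ⊔ z₁) x₂ (y₂ ⊔ c)
  exi : ∀ x₁ ∈ I₁, ∀ x₂ ∈ I₂, ∃ x : α, Phi c x₁ x₂ x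
  onto : ∀ x : α, ∃ x₁ ∈ I₁, ∃ x₂ ∈ I₂, Phi c x₁ x₂ x

/-!
The axioms (Mod1) and (Mod2) say that the three infima in `φ_c(x₁, x₂, x)` survive joining
every entry with an arbitrary `y`, and (exi) forces `c ≤ a₁ ⊔ a₂` for all `a₁ ∈ I₁`, `a₂ ∈ I₂`.
With these, `x ≤ y ⊔ c` upgrades to `x ≤ x₁ ⊔ y` and `x ≤ x₂ ⊔ y`, which together with (dist) makes
`φ_c` monotone in its components; this gives uniqueness of `x` and one half of join preservation.
(Abs) recovers the components from `x`, and the other half of join preservation peels the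
components off `(x₁ ⊔ z₁) ⊔ (x ⊔ z)` one at a time with the lifted (dist).
-/

section

variable [SemilatticeSup α] {a b m u c x₁ x₂ x : α}

theorem PMeet.le (h : PMeet a b m) (ha : u ≤ a) (hb : u ≤ b) : u ≤ m :=
  h.2.2 u ha hb

theorem PMeet.of_le (hab : a ≤ b) : PMeet a b a :=
  ⟨le_rfl, hab, fun _ hu _ => hu⟩

theorem PMeet.symm (h : PMeet a b m) : PMeet b a m :=
  ⟨h.2.1, h.1, fun _ hb ha => h.le ha hb⟩

theorem MeetJoinEq.symm {a' b' y : α} (h : MeetJoinEq a b y a' b') :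
    MeetJoinEq b a y b' a' :=
  ⟨fun m hm => (h.1 m hm.symm).symm, fun m' hm' => by
    obtain ⟨m, hm, rfl⟩ := h.2 m' hm'.symm
    exact ⟨m, hm.symm, rfl⟩⟩

theorem Phi.dist (h : Phi c x₁ x₂ x) : PMeet (x ⊔ x₁) (x ⊔ x₂) x := h.1

theorem Phi.p1 (h : Phi c x₁ x₂ x) : PMeet (x ⊔ x₁) (c ⊔ x₁) x₁ := h.2.1

theorem Phi.p2 (h : Phi c x₁ x₂ x) : PMeet (x ⊔ x₂) (c ⊔ x₂) x₂ := h.2.2.1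

theorem Phi.join (h : Phi c x₁ x₂ x) : x₁ ⊔ x₂ = x ⊔ c := h.2.2.2

theorem Phi.symm (h : Phi c x₁ x₂ x) : Phi c x₂ x₁ x :=
  ⟨h.dist.symm, h.p2, h.p1, sup_comm x₂ x₁ ▸ h.join⟩

theorem Phi.le_sup (h : Phi c x₁ x₂ x) : x ≤ x₁ ⊔ x₂ :=
  h.join ▸ le_sup_left

theorem Phi.c_le_sup (h : Phi c x₁ x₂ x) : c ≤ x₁ ⊔ x₂ :=
  h.join ▸ le_sup_right

theorem Phi.sup_c_le {w₁ w₂ w : α} (hx : Phi c x₁ x₂ x) (hw : Phi c w₁ w₂ w)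
    (h₁ : x₁ ≤ w₁) (h₂ : x₂ ≤ w₂) : x ⊔ c ≤ w ⊔ c :=
  hx.join ▸ hw.join ▸ sup_le_sup h₁ h₂

end

namespace CDirectSum

variable [SemilatticeSup α] {c : α} {I₁ I₂ : Set α}

theorem symm (h : CDirectSum c I₁ I₂) : CDirectSum c I₂ I₁ where
  sub1 := h.sub2
  sub2 := h.sub1
  mod1 x y x₂ h₂ x₁ h₁ hle := (h.mod1 x y x₁ h₁ x₂ h₂ (sup_comm x₂ x₁ ▸ hle)).symm
  mod2 x y x₂ h₂ x₁ h₁ hle := (h.mod2 x y x₁ h₁ x₂ h₂ (sup_comm x₂ x₁ ▸ hle)).symm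
  abs1 := h.abs2
  abs2 := h.abs1
  exi x₂ h₂ x₁ h₁ := (h.exi x₁ h₁ x₂ h₂).imp fun _ hx => hx.symm
  onto x := by
    obtain ⟨x₁, h₁, x₂, h₂, hx⟩ := h.onto x
    exact ⟨x₂, h₂, x₁, h₁, hx.symm⟩

theorem c_le_sup (h : CDirectSum c I₁ I₂) {a₁ a₂ : α} (h₁ : a₁ ∈ I₁) (h₂ : a₂ ∈ I₂) :
    c ≤ a₁ ⊔ a₂ :=
  (h.exi a₁ h₁ a₂ h₂).elim fun _ hx => hx.c_le_sup

variable {x₁ x₂ x : α}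

theorem le_sup_of_phi (h : CDirectSum c I₁ I₂) (h₁ : x₁ ∈ I₁) (h₂ : x₂ ∈ I₂)
    (hx : Phi c x₁ x₂ x) {u y : α} (hu₁ : u ≤ x ⊔ y ⊔ x₁) (hu₂ : u ≤ x ⊔ y ⊔ x₂) :
    u ≤ x ⊔ y :=
  ((h.mod1 x y x₁ h₁ x₂ h₂ hx.join.le).1 x hx.dist).le hu₁ hu₂

theorem phi_le_fst_sup (h : CDirectSum c I₁ I₂) (h₁ : x₁ ∈ I₁) (h₂ : x₂ ∈ I₂)
    (hx : Phi c x₁ x₂ x) {y : α} (hy : x ≤ y ⊔ c) : x ≤ x₁ ⊔ y := by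
  have hp := (h.mod2 x y x₁ h₁ x₂ h₂ hx.le_sup).1.1 x₁ hx.p1
  exact hp.le (le_sup_left.trans le_sup_left)
    (hy.trans (by rw [sup_comm y c]; exact le_sup_left))

theorem phi_le_snd_sup (h : CDirectSum c I₁ I₂) (h₁ : x₁ ∈ I₁) (h₂ : x₂ ∈ I₂)
    (hx : Phi c x₁ x₂ x) {y : α} (hy : x ≤ y ⊔ c) : x ≤ x₂ ⊔ y :=
  h.symm.phi_le_fst_sup h₂ h₁ hx.symm hy

theorem phi_mono (h : CDirectSum c I₁ I₂) (h₁ : x₁ ∈ I₁) (h₂ : x₂ ∈ I₂)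
    (hx : Phi c x₁ x₂ x) {w₁ w₂ w : α} (hw : Phi c w₁ w₂ w)
    (hxw₁ : x₁ ≤ w₁) (hxw₂ : x₂ ≤ w₂) : x ≤ w := by
  have hxc : x ≤ w ⊔ c := le_sup_left.trans (hx.sup_c_le hw hxw₁ hxw₂)
  refine hw.dist.le ?_ ?_
  · calc x ≤ x₁ ⊔ w := h.phi_le_fst_sup h₁ h₂ hx hxc
      _ ≤ w ⊔ w₁ := sup_comm x₁ w ▸ sup_le_sup_left hxw₁ w
  · calc x ≤ x₂ ⊔ w := h.phi_le_snd_sup h₁ h₂ hx hxc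
      _ ≤ w ⊔ w₂ := sup_comm x₂ w ▸ sup_le_sup_left hxw₂ w

theorem phi_fst_le (h : CDirectSum c I₁ I₂) (h₁ : x₁ ∈ I₁) (h₂ : x₂ ∈ I₂)
    (hx : Phi c x₁ x₂ x) {z₁ z₂ : α} (g₁ : z₁ ∈ I₁) (g₂ : z₂ ∈ I₂) (hz : Phi c z₁ z₂ x) :
    z₁ ≤ x₁ := by
  have hz₁c : z₁ ≤ x ⊔ c := hz.join ▸ le_sup_left
  have hz₁x₁c : z₁ ≤ x₁ ⊔ c :=
    ((h.abs1 z₁ g₁ x₁ h₁ x₂ h₂).1 z₁ (.of_le (hx.join ▸ hz₁c))).2.1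
  have hz₁x : z₁ ≤ x ⊔ x₁ := by
    refine h.le_sup_of_phi g₁ g₂ hz le_sup_right (hz₁c.trans ?_)
    calc x ⊔ c ≤ x ⊔ (x₁ ⊔ z₂) := sup_le_sup_left (h.c_le_sup h₁ g₂) x
      _ = x ⊔ x₁ ⊔ z₂ := (sup_assoc _ _ _).symm
  exact hx.p1.le hz₁x (sup_comm x₁ c ▸ hz₁x₁c)

theorem phi_snd_le (h : CDirectSum c I₁ I₂) (h₁ : x₁ ∈ I₁) (h₂ : x₂ ∈ I₂)
    (hx : Phi c x₁ x₂ x) {z₁ z₂ : α} (g₁ : z₁ ∈ I₁) (g₂ : z₂ ∈ I₂) (hz : Phi c z₁ z₂ x) :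
    z₂ ≤ x₂ :=
  h.symm.phi_fst_le h₂ h₁ hx.symm g₂ g₁ hz.symm

theorem phi_sup_le (h : CDirectSum c I₁ I₂) (h₁ : x₁ ∈ I₁) (h₂ : x₂ ∈ I₂)
    (hx : Phi c x₁ x₂ x) {z₁ z₂ z w : α} (g₁ : z₁ ∈ I₁) (g₂ : z₂ ∈ I₂) (hz : Phi c z₁ z₂ z)
    (hw : Phi c (x₁ ⊔ z₁) (x₂ ⊔ z₂) w) : w ≤ x ⊔ z := by
  have hwc : w ≤ x ⊔ z ⊔ c := by
    calc w ≤ w ⊔ c := le_sup_left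
      _ = x ⊔ z ⊔ c := by
        rw [← hw.join, sup_sup_sup_comm, hx.join, hz.join, sup_sup_sup_comm, sup_idem]
  have hw₁ := h.phi_le_fst_sup (h.sub1 x₁ h₁ z₁ g₁) (h.sub2 x₂ h₂ z₂ g₂) hw hwc
  have hw₂ := h.phi_le_snd_sup (h.sub1 x₁ h₁ z₁ g₁) (h.sub2 x₂ h₂ z₂ g₂) hw hwc
  have hwz₁ : w ≤ x ⊔ (z ⊔ z₁) := by
    refine h.le_sup_of_phi h₁ h₂ hx (hw₁.trans_eq (by ac_rfl)) (hwc.trans ?_)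
    calc x ⊔ z ⊔ c ≤ x ⊔ z ⊔ (z₁ ⊔ x₂) := sup_le_sup_left (h.c_le_sup g₁ h₂) _
      _ = x ⊔ (z ⊔ z₁) ⊔ x₂ := by ac_rfl
  have hwz₂ : w ≤ x ⊔ (z ⊔ z₂) := by
    refine h.le_sup_of_phi h₁ h₂ hx (hwc.trans ?_) (hw₂.trans_eq (by ac_rfl))
    calc x ⊔ z ⊔ c ≤ x ⊔ z ⊔ (x₁ ⊔ z₂) := sup_le_sup_left (h.c_le_sup h₁ g₂) _
      _ = x ⊔ (z ⊔ z₂) ⊔ x₁ := by ac_rfl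
  exact (h.le_sup_of_phi g₁ g₂ hz (hwz₁.trans_eq (by ac_rfl))
    (hwz₂.trans_eq (by ac_rfl))).trans_eq (sup_comm z x)

theorem phi_sup (h : CDirectSum c I₁ I₂) (h₁ : x₁ ∈ I₁) (h₂ : x₂ ∈ I₂)
    (hx : Phi c x₁ x₂ x) {z₁ z₂ z : α} (g₁ : z₁ ∈ I₁) (g₂ : z₂ ∈ I₂) (hz : Phi c z₁ z₂ z) :
    Phi c (x₁ ⊔ z₁) (x₂ ⊔ z₂) (x ⊔ z) := by
  obtain ⟨w, hw⟩ := h.exi _ (h.sub1 x₁ h₁ z₁ g₁) _ (h.sub2 x₂ h₂ z₂ g₂)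
  have hxw := h.phi_mono h₁ h₂ hx hw le_sup_left le_sup_left
  have hzw := h.phi_mono g₁ g₂ hz hw le_sup_right le_sup_right
  rwa [← le_antisymm (h.phi_sup_le h₁ h₂ hx g₁ g₂ hz hw) (sup_le hxw hzw)]

end CDirectSum

/-- in a c-direct sum, φ_c defines a semilattice isomorphism
between I₁ × I₂ (componentwise join) and A: it is a well-defined bijective
correspondence which preserves joins. -/
theorem phi_isomorphism [SemilatticeSup α] (c : α) (I₁ I₂ : Set α)
    (h : CDirectSum c I₁ I₂) :
    (∀ x₁ ∈ I₁, ∀ x₂ ∈ I₂, ∃! x : α, Phi c x₁ x₂ x) ∧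
    (∀ x : α, ∃! p : α × α, p.1 ∈ I₁ ∧ p.2 ∈ I₂ ∧ Phi c p.1 p.2 x) ∧
    (∀ x₁ ∈ I₁, ∀ x₂ ∈ I₂, ∀ z₁ ∈ I₁, ∀ z₂ ∈ I₂, ∀ x z : α,
      Phi c x₁ x₂ x → Phi c z₁ z₂ z →
      Phi c (x₁ ⊔ z₁) (x₂ ⊔ z₂) (x ⊔ z)) := by
  refine ⟨fun x₁ h₁ x₂ h₂ => ?_, fun x => ?_,
    fun x₁ h₁ x₂ h₂ z₁ g₁ z₂ g₂ x z hx hz => h.phi_sup h₁ h₂ hx g₁ g₂ hz⟩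
  · obtain ⟨x, hx⟩ := h.exi x₁ h₁ x₂ h₂
    exact ⟨x, hx, fun y hy =>
      le_antisymm (h.phi_mono h₁ h₂ hy hx le_rfl le_rfl) (h.phi_mono h₁ h₂ hx hy le_rfl le_rfl)⟩
  · obtain ⟨x₁, h₁, x₂, h₂, hx⟩ := h.onto x
    refine ⟨(x₁, x₂), ⟨h₁, h₂, hx⟩, ?_⟩
    rintro ⟨z₁, z₂⟩ ⟨g₁, g₂, hz⟩
    exact Prod.ext
      (le_antisymm (h.phi_fst_le h₁ h₂ hx g₁ g₂ hz) (h.phi_fst_le g₁ g₂ hz h₁ h₂ hx))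
      (le_antisymm (h.phi_snd_le h₁ h₂ hx g₁ g₂ hz) (h.phi_snd_le g₁ g₂ hz h₁ h₂ hx))
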